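/- For the maximum segment product with the convention that the empty segment has product 1: for all integer lists l₁, l₂, msp(l₁ ++ l₂) = max(msp l₁, max(msp l₂, max(maxtp l₁ * maxpp l₂, mintp l₁ * minpp l₂))), where msp l is the maximum product over all segments (including the empty segment) of l, maxpp/minpp are the maximum/minimum products over prefixes (including the empty prefix), and maxtp/mintp are the maximum/minimum products over suffixes (including the empty suffix). -/

import Mathlib

/-- Maximum segment product (the empty segment, with product `1`, is allowed). -/
def msp (l : List ℤ) : ℤ := (((l.inits.flatMap List.tails).map List.prod).foldr max 1)

/-- Maximum prefix product (the empty prefix is allowed). -/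
def maxpp (l : List ℤ) : ℤ := ((l.inits.map List.prod).foldr max 1)

/-- Minimum prefix product (the empty prefix is allowed). -/
def minpp (l : List ℤ) : ℤ := ((l.inits.map List.prod).foldr min 1)

/-- Maximum tail (suffix) product (the empty suffix is allowed). -/
def maxtp (l : List ℤ) : ℤ := ((l.tails.map List.prod).foldr max 1)

/-- Minimum tail (suffix) product (the empty suffix is allowed). -/
def mintp (l : List ℤ) : ℤ := ((l.tails.map List.prod).foldr min 1)

/-!
Each of `msp`, `maxpp`, `minpp`, `maxtp`, `mintp` is the greatest (least) element of the set of
products of segments (prefixes, suffixes): the fold starts at `1`, which is itself the product of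
the empty list. A segment of `l₁ ++ l₂` lies in `l₁`, lies in `l₂`, or is a suffix of `l₁`
followed by a prefix of `l₂`. Over that last kind the product is maximal at a corner of the box
`[mintp l₁, maxtp l₁] × [minpp l₂, maxpp l₂]`, and since both maxima are at least `1`, the mixed
corners `mintp l₁ * maxpp l₂` and `maxtp l₁ * minpp l₂` are dominated.
-/
open Set
open scoped Pointwise

namespace List

section Fold

variable {α : Type*} [LinearOrder α]

theorem foldr_max_mem_cons (l : List α) (b : α) : l.foldr max b ∈ b :: l := by
  induction l with
  | nil => exact mem_singleton_self b
  | cons a l ih =>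
    rw [foldr_cons]
    rcases max_choice a (l.foldr max b) with h | h <;> rw [h]
    · exact mem_cons_of_mem _ mem_cons_self
    · exact (cons_subset_cons b (subset_cons_self a l)) ih

theorem isGreatest_foldr_max {l : List α} {b : α} (hb : b ∈ l) :
    IsGreatest {x | x ∈ l} (l.foldr max b) :=
  ⟨cons_subset.2 ⟨hb, Subset.refl l⟩ (foldr_max_mem_cons l b),
    fun _ hx => le_max_of_le' b hx le_rfl⟩

theorem isLeast_foldr_min {l : List α} {b : α} (hb : b ∈ l) :
    IsLeast {x | x ∈ l} (l.foldr min b) :=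
  isGreatest_foldr_max (α := αᵒᵈ) hb

end Fold

section Products

variable {M : Type*} [Monoid M] [LinearOrder M] {S : List (List M)} {P : List M → Prop}

theorem isGreatest_foldr_max_map_prod (hS : ∀ s, s ∈ S ↔ P s) (hP : P []) :
    IsGreatest (prod '' {s | P s}) ((S.map prod).foldr max 1) := by
  have one_mem : (1 : M) ∈ S.map prod := mem_map.2 ⟨[], (hS []).2 hP, prod_nil⟩
  convert isGreatest_foldr_max one_mem using 1
  ext
  simp [hS]

theorem isLeast_foldr_min_map_prod (hS : ∀ s, s ∈ S ↔ P s) (hP : P []) :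
    IsLeast (prod '' {s | P s}) ((S.map prod).foldr min 1) := by
  have one_mem : (1 : M) ∈ S.map prod := mem_map.2 ⟨[], (hS []).2 hP, prod_nil⟩
  convert isLeast_foldr_min one_mem using 1
  ext
  simp [hS]

end Products

variable {α : Type*}

theorem mem_flatMap_tails_inits {s l : List α} : s ∈ l.inits.flatMap tails ↔ s <:+: l := by
  simp only [mem_flatMap, mem_inits, mem_tails]
  constructor
  · rintro ⟨_, ⟨v, rfl⟩, u, rfl⟩
    exact ⟨u, v, rfl⟩
  · rintro ⟨u, v, rfl⟩
    exact ⟨u ++ s, ⟨v, rfl⟩, u, rfl⟩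

theorem prod_image_infix_append [Monoid α] (l₁ l₂ : List α) :
    prod '' {s | s <:+: l₁ ++ l₂} =
      prod '' {s | s <:+: l₁} ∪
        (prod '' {s | s <:+: l₂} ∪ prod '' {t | t <:+ l₁} * prod '' {p | p <+: l₂}) := by
  ext x
  simp only [mem_image, mem_union, mem_mul, mem_ofPred_eq, infix_append_iff]
  constructor
  · rintro ⟨_, h | h | ⟨t, p, rfl, ht, hp⟩, rfl⟩
    · exact .inl ⟨_, h, rfl⟩
    · exact .inr (.inl ⟨_, h, rfl⟩)
    · exact .inr (.inr ⟨_, ⟨t, ht, rfl⟩, _, ⟨p, hp, rfl⟩, (prod_append ..).symm⟩)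
  · rintro (⟨s, h, rfl⟩ | ⟨s, h, rfl⟩ | ⟨_, ⟨t, ht, rfl⟩, _, ⟨p, hp, rfl⟩, rfl⟩)
    · exact ⟨s, .inl h, rfl⟩
    · exact ⟨s, .inr (.inl h), rfl⟩
    · exact ⟨t ++ p, .inr (.inr ⟨t, p, rfl, ht, hp⟩), prod_append ..⟩

end List

theorem isGreatest_mul_of_nonneg {R : Type*} [Ring R] [LinearOrder R] [IsOrderedRing R]
    {A B : Set R} {p q r s : R} (hp : IsLeast A p) (hq : IsGreatest A q) (hr : IsLeast B r)
    (hs : IsGreatest B s) (hq0 : 0 ≤ q) (hs0 : 0 ≤ s) :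
    IsGreatest (A * B) (max (q * s) (p * r)) := by
  refine ⟨?_, ?_⟩
  · rcases max_choice (q * s) (p * r) with h | h <;> rw [h]
    · exact mul_mem_mul hq.1 hs.1
    · exact mul_mem_mul hp.1 hr.1
  rintro _ ⟨a, ha, b, hb, rfl⟩
  obtain hb0 | hb0 := le_total 0 b
  · calc a * b ≤ q * b := mul_le_mul_of_nonneg_right (hq.2 ha) hb0
      _ ≤ q * s := mul_le_mul_of_nonneg_left (hs.2 hb) hq0
      _ ≤ _ := le_max_left _ _
  have hab : a * b ≤ p * b := mul_le_mul_of_nonpos_right (hp.2 ha) hb0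
  obtain hp0 | hp0 := le_total 0 p
  · calc a * b ≤ p * b := hab
      _ ≤ 0 := mul_nonpos_of_nonneg_of_nonpos hp0 hb0
      _ ≤ q * s := mul_nonneg hq0 hs0
      _ ≤ _ := le_max_left _ _
  · calc a * b ≤ p * b := hab
      _ ≤ p * r := mul_le_mul_of_nonpos_left (hr.2 hb) hp0
      _ ≤ _ := le_max_right _ _

theorem isGreatest_msp (l : List ℤ) : IsGreatest (List.prod '' {s | s <:+: l}) (msp l) :=
  List.isGreatest_foldr_max_map_prod (fun _ => List.mem_flatMap_tails_inits) List.nil_infix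

theorem isGreatest_maxpp (l : List ℤ) : IsGreatest (List.prod '' {s | s <+: l}) (maxpp l) :=
  List.isGreatest_foldr_max_map_prod (List.mem_inits · l) List.nil_prefix

theorem isLeast_minpp (l : List ℤ) : IsLeast (List.prod '' {s | s <+: l}) (minpp l) :=
  List.isLeast_foldr_min_map_prod (List.mem_inits · l) List.nil_prefix

theorem isGreatest_maxtp (l : List ℤ) : IsGreatest (List.prod '' {s | s <:+ l}) (maxtp l) :=
  List.isGreatest_foldr_max_map_prod (List.mem_tails · l) List.nil_suffix

theorem isLeast_mintp (l : List ℤ) : IsLeast (List.prod '' {s | s <:+ l}) (mintp l) :=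
  List.isLeast_foldr_min_map_prod (List.mem_tails · l) List.nil_suffix

/-- Correctness of the combinator for maximum segment product from the case study. -/
theorem msp_append (l₁ l₂ : List ℤ) :
    msp (l₁ ++ l₂) =
      max (msp l₁) (max (msp l₂)
        (max (maxtp l₁ * maxpp l₂) (mintp l₁ * minpp l₂))) := by
  have one_le_maxtp : 1 ≤ maxtp l₁ := (isGreatest_maxtp l₁).2 ⟨[], List.nil_suffix, rfl⟩
  have one_le_maxpp : 1 ≤ maxpp l₂ := (isGreatest_maxpp l₂).2 ⟨[], List.nil_prefix, rfl⟩
  have cross := isGreatest_mul_of_nonneg (isLeast_mintp l₁) (isGreatest_maxtp l₁)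
    (isLeast_minpp l₂) (isGreatest_maxpp l₂) (zero_le_one.trans one_le_maxtp)
    (zero_le_one.trans one_le_maxpp)
  have h := (isGreatest_msp l₁).union ((isGreatest_msp l₂).union cross)
  rw [← List.prod_image_infix_append] at h
  exact (isGreatest_msp (l₁ ++ l₂)).unique h
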